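/- arXiv:math/9805078 — 5 statements merged into one kernel-verified Lean document; each statement's English description precedes it below -/
import Mathlib

section
/- Let G be a finite connected simple graph with v vertices that has the double connectivity property. Then the number of edges of G is at least 3·⌊(v−1)/2⌋. -/
open Finset

section
variable {V : Type*} [DecidableEq V]

lemma walk_countP_parity {G : SimpleGraph V} {x y : V} (w : G.Walk x y) (v : V) :
    (w.edges.countP (fun e => decide (v ∈ e))) % 2
      = ((if v = x then 1 else 0) + (if v = y then 1 else 0)) % 2 := by
  induction w with
  | nil => simp only [SimpleGraph.Walk.edges_nil, List.countP_nil]; split <;> rfl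
  | cons h q ih =>
    rename_i a b c
    rw [SimpleGraph.Walk.edges_cons, List.countP_cons]
    have hab : a ≠ b := h.ne
    have hhead : (if (decide (v ∈ s(a, b)) : Bool) = true then 1 else 0)
        = (if v = a then 1 else 0) + (if v = b then 1 else 0) := by
      by_cases hva : v = a <;> by_cases hvb : v = b <;> simp_all [Sym2.mem_iff]
    rw [hhead]
    have hA : (if v = a then 1 else 0) ≤ 1 := by split <;> omega
    have hB : (if v = b then 1 else 0) ≤ 1 := by split <;> omega
    have hC : (if v = c then 1 else 0) ≤ 1 := by split <;> omega
    omega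

/-- even incidence count at every vertex, for the edge set of a cycle. -/
lemma cycle_even_incidence {G : SimpleGraph V} {x : V} (c : G.Walk x x)
    (hnd : c.edges.Nodup) (v : V) :
    Even ((c.edges.toFinset.filter (fun e => v ∈ e)).card) := by
  have h1 : (c.edges.toFinset.filter (fun e => v ∈ e)).card
      = c.edges.countP (fun e => decide (v ∈ e)) := by
    rw [show (Finset.filter (fun e => v ∈ e) c.edges.toFinset)
        = (c.edges.filter (fun e => decide (v ∈ e))).toFinset from by ext; simp,
      List.toFinset_card_of_nodup (List.Nodup.filter _ hnd), List.countP_eq_length_filter]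
  rw [h1, Nat.even_iff, walk_countP_parity c v]
  split <;> omega
end

section
variable {V : Type*} [DecidableEq V] [Fintype V]

lemma even_sum_iff_even_card_odd {α : Type*} [DecidableEq α] (s : Finset α) (f : α → ℕ) :
    Even (∑ x ∈ s, f x) ↔ Even ((s.filter (fun x => Odd (f x))).card) := by
  rw [Nat.even_iff, Nat.even_iff, Finset.sum_nat_mod]
  have h1 : ∑ x ∈ s, f x % 2 = ∑ x ∈ s, (if Odd (f x) then 1 else 0) := by
    apply Finset.sum_congr rfl
    intro x _
    by_cases h : Odd (f x)
    · simp [h, Nat.odd_iff.mp h]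
    · simp [h, Nat.even_iff.mp (Nat.not_odd_iff_even.mp h)]
  rw [h1, Finset.sum_boole]
  simp

variable {r : V} {pt : V → V} {depth : V → ℕ}
  (hpt : ∀ v, v ≠ r → depth (pt v) + 1 = depth v)
  (hd0 : ∀ v, depth v = 0 ↔ v = r)

include hpt hd0

lemma edge_inj : ∀ u v, u ≠ r → v ≠ r → s(u, pt u) = s(v, pt v) → u = v := by
  intro u v hu hv h
  rw [Sym2.eq_iff] at h
  rcases h with ⟨h1, _⟩ | ⟨h1, h2⟩
  · exact h1
  · exfalso
    have e1 := hpt u hu; have e2 := hpt v hv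
    rw [h2] at e1; rw [← h1] at e2
    omega

lemma forest_even_empty (W : Finset (Sym2 V))
    (hW : ∀ x ∈ W, ∃ v, v ≠ r ∧ x = s(v, pt v))
    (heven : ∀ v, Even ((W.filter (fun x => v ∈ x)).card)) : W = ∅ := by
  by_contra hne
  obtain ⟨x₀, hx₀⟩ := Finset.nonempty_of_ne_empty hne
  obtain ⟨v₀, hv₀r, rfl⟩ := hW x₀ hx₀
  have hDne : (Finset.univ.filter (fun v => v ≠ r ∧ s(v, pt v) ∈ W)).Nonempty :=
    ⟨v₀, by simp [hv₀r, hx₀]⟩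
  obtain ⟨u, hu, humax⟩ := Finset.exists_max_image _ depth hDne
  simp only [Finset.mem_filter, Finset.mem_univ, true_and] at hu
  have hsingle : W.filter (fun x => u ∈ x) = {s(u, pt u)} := by
    apply Finset.eq_singleton_iff_unique_mem.mpr
    constructor
    · simp only [Finset.mem_filter]
      exact ⟨hu.2, Sym2.mem_mk_left _ _⟩
    · intro x hx
      simp only [Finset.mem_filter] at hx
      obtain ⟨w, hwr, rfl⟩ := hW x hx.1
      rcases Sym2.mem_iff.mp hx.2 with h | h
      · rw [h]
      · exfalso
        have hw : w ∈ Finset.univ.filter (fun v => v ≠ r ∧ s(v, pt v) ∈ W) := by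
          simp [hwr, hx.1]
        have h2 := humax w hw
        have e := hpt w hwr
        rw [← h] at e
        omega
  have := heven u
  rw [hsingle] at this
  simp at this

end

section
variable {V : Type*} [DecidableEq V] [Fintype V]

variable {r : V} {pt : V → V} {depth : V → ℕ}
  (hpt : ∀ v, v ≠ r → depth (pt v) + 1 = depth v)
  (hd0 : ∀ v, depth v = 0 ↔ v = r)

include hpt hd0

lemma edge_inj' : ∀ u v, u ≠ r → v ≠ r → s(u, pt u) = s(v, pt v) → u = v := by
  intro u v hu hv h
  rw [Sym2.eq_iff] at h
  rcases h with ⟨h1, _⟩ | ⟨h1, h2⟩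
  · exact h1
  · exfalso
    have e1 := hpt u hu; have e2 := hpt v hv
    rw [h2] at e1; rw [← h1] at e2
    omega

lemma tree_pairing : ∀ (n : ℕ) (s : Finset V), s.card = n → r ∈ s →
    (∀ v ∈ s, v ≠ r → pt v ∈ s) →
    ∃ P : Finset (Sym2 V × Sym2 V),
      (s.card - 1) / 2 ≤ P.card ∧
      (∀ p ∈ P, (∃ v ∈ s, v ≠ r ∧ p.1 = s(v, pt v)) ∧ (∃ v ∈ s, v ≠ r ∧ p.2 = s(v, pt v)) ∧
        p.1 ≠ p.2 ∧ ∃ w, w ∈ p.1 ∧ w ∈ p.2) ∧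
      (∀ p ∈ P, ∀ q ∈ P, p ≠ q → p.1 ≠ q.1 ∧ p.1 ≠ q.2 ∧ p.2 ≠ q.1 ∧ p.2 ≠ q.2) := by
  intro n
  induction n using Nat.strong_induction_on with
  | _ n ih =>
  intro s hcard hrs hcl
  by_cases hsmall : s.card ≤ 2
  · exact ⟨∅, by simp; omega, by simp, by simp⟩
  push_neg at hsmall
  -- pick v of maximal depth among s.erase r
  have hene : (s.erase r).Nonempty := by
    rw [← Finset.card_pos, Finset.card_erase_of_mem hrs]; omega
  obtain ⟨v, hvmem, hvmax⟩ := Finset.exists_max_image (s.erase r) depth hene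
  have hvr : v ≠ r := (Finset.mem_erase.mp hvmem).1
  have hvs : v ∈ s := (Finset.mem_erase.mp hvmem).2
  have has : pt v ∈ s := hcl v hvs hvr
  have hdv : depth (pt v) + 1 = depth v := hpt v hvr
  have hva : v ≠ pt v := fun h => by rw [← h] at hdv; omega
  -- a generic fact: no element of s.erase r has pt equal to v (or to any max-depth elt)
  have hnochild : ∀ u ∈ s, u ≠ r → pt u ≠ v := by
    intro u hus hur h
    have e := hpt u hur
    rw [h] at e
    have := hvmax u (Finset.mem_erase.mpr ⟨hur, hus⟩)
    omega
  by_cases hA : ∃ v' ∈ s.erase r, pt v' = pt v ∧ v' ≠ v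
  · -- Case A : v has a sibling leaf v'
    obtain ⟨v', hv'mem, hv'pt, hv'v⟩ := hA
    have hv'r : v' ≠ r := (Finset.mem_erase.mp hv'mem).1
    have hv's : v' ∈ s := (Finset.mem_erase.mp hv'mem).2
    have hdv' : depth (pt v') + 1 = depth v' := hpt v' hv'r
    have hnochild' : ∀ u ∈ s, u ≠ r → pt u ≠ v' := by
      intro u hus hur h
      have e := hpt u hur
      rw [h] at e
      have h2 := hvmax u (Finset.mem_erase.mpr ⟨hur, hus⟩)
      have h3 := hvmax v' hv'mem
      rw [hv'pt] at hdv'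
      omega
    set s' : Finset V := (s.erase v).erase v' with hs'
    have hs'sub : s' ⊆ s := Finset.Subset.trans (Finset.erase_subset _ _) (Finset.erase_subset _ _)
    have hmem' : ∀ u, u ∈ s' ↔ u ∈ s ∧ u ≠ v ∧ u ≠ v' := by
      intro u; simp [hs', Finset.mem_erase]; tauto
    have hcard' : s'.card = n - 2 := by
      rw [hs', Finset.card_erase_of_mem (Finset.mem_erase.mpr ⟨hv'v, hv's⟩),
        Finset.card_erase_of_mem hvs, hcard]
      omega
    have hrs' : r ∈ s' := (hmem' r).mpr ⟨hrs, fun h => hvr h.symm, fun h => hv'r h.symm⟩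
    have hcl' : ∀ u ∈ s', u ≠ r → pt u ∈ s' := by
      intro u hus' hur
      have hus := hs'sub hus'
      refine (hmem' (pt u)).mpr ⟨hcl u hus hur, hnochild u hus hur, hnochild' u hus hur⟩
    obtain ⟨P', hP'card, hP'mem, hP'dis⟩ := ih (n-2) (by omega) s' hcard' hrs' hcl'
    refine ⟨insert (s(v, pt v), s(v', pt v')) P', ?_, ?_, ?_⟩
    · have hnotin : (s(v, pt v), s(v', pt v')) ∉ P' := by
        intro hin
        obtain ⟨⟨u, hus', hur, hu⟩, _, _, _⟩ := hP'mem _ hin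
        have := edge_inj' hpt hd0 u v hur hvr hu.symm
        exact ((hmem' u).mp hus').2.1 this
      rw [Finset.card_insert_of_notMem hnotin]
      omega
    · intro p hp
      rcases Finset.mem_insert.mp hp with rfl | hp'
      · refine ⟨⟨v, hvs, hvr, rfl⟩, ⟨v', hv's, hv'r, rfl⟩, ?_, ?_⟩
        · intro h
          exact hv'v (edge_inj' hpt hd0 v' v hv'r hvr h.symm)
        · exact ⟨pt v, Sym2.mem_mk_right _ _, by rw [← hv'pt]; exact Sym2.mem_mk_right _ _⟩
      · obtain ⟨⟨u, hus, hur, hu⟩, ⟨w, hws, hwr, hw⟩, h3, h4⟩ := hP'mem p hp'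
        exact ⟨⟨u, hs'sub hus, hur, hu⟩, ⟨w, hs'sub hws, hwr, hw⟩, h3, h4⟩
    · -- pairwise distinctness
      have key : ∀ q ∈ P', q.1 ≠ s(v, pt v) ∧ q.1 ≠ s(v', pt v') ∧
          q.2 ≠ s(v, pt v) ∧ q.2 ≠ s(v', pt v') := by
        intro q hq
        obtain ⟨⟨u, hus, hur, hu⟩, ⟨w, hws, hwr, hw⟩, _, _⟩ := hP'mem q hq
        have hu2 := (hmem' u).mp hus
        have hw2 := (hmem' w).mp hws
        refine ⟨?_, ?_, ?_, ?_⟩ <;> intro h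
        · exact hu2.2.1 (edge_inj' hpt hd0 u v hur hvr (hu ▸ h))
        · exact hu2.2.2 (edge_inj' hpt hd0 u v' hur hv'r (hu ▸ h))
        · exact hw2.2.1 (edge_inj' hpt hd0 w v hwr hvr (hw ▸ h))
        · exact hw2.2.2 (edge_inj' hpt hd0 w v' hwr hv'r (hw ▸ h))
      intro p hp q hq hpq
      rcases Finset.mem_insert.mp hp with rfl | hp' <;>
        rcases Finset.mem_insert.mp hq with rfl | hq'
      · exact absurd rfl hpq
      · obtain ⟨k1, k2, k3, k4⟩ := key q hq'
        exact ⟨k1.symm, k3.symm, k2.symm, k4.symm⟩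
      · obtain ⟨k1, k2, k3, k4⟩ := key p hp'
        exact ⟨k1, k2, k3, k4⟩
      · exact hP'dis p hp' q hq' hpq
  · -- Case B : v is an only child
    push_neg at hA
    have honly : ∀ u ∈ s, u ≠ r → pt u = pt v → u = v := by
      intro u hus hur h
      by_contra hne
      exact hne (hA u (Finset.mem_erase.mpr ⟨hur, hus⟩) h)
    have har : pt v ≠ r := by
      intro harr
      -- then s ⊆ {r, v}, contradicting 2 < #s
      have hsub : s ⊆ {r, v} := by
        intro u hus
        simp only [Finset.mem_insert, Finset.mem_singleton]
        by_contra hcon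
        push_neg at hcon
        obtain ⟨hur, huv⟩ := hcon
        have hu1 : depth u ≠ 0 := fun h => hur ((hd0 u).mp h)
        have hu2 : depth u ≤ depth v := hvmax u (Finset.mem_erase.mpr ⟨hur, hus⟩)
        have hr0 : depth r = 0 := (hd0 r).mpr rfl
        rw [harr] at hdv
        have hptu : depth (pt u) + 1 = depth u := hpt u hur
        have hptu0 : depth (pt u) = 0 := by omega
        have : pt u = r := (hd0 (pt u)).mp hptu0
        rw [← harr] at this
        exact huv (honly u hus hur this)
      have := Finset.card_le_card hsub
      have : ({r, v} : Finset V).card ≤ 2 := Finset.card_insert_le _ _ |>.trans (by simp)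
      omega
    set a := pt v with ha
    have haa : pt a ∈ s := hcl a has har
    set s' : Finset V := (s.erase v).erase a with hs'
    have hs'sub : s' ⊆ s := Finset.Subset.trans (Finset.erase_subset _ _) (Finset.erase_subset _ _)
    have hmem' : ∀ u, u ∈ s' ↔ u ∈ s ∧ u ≠ v ∧ u ≠ a := by
      intro u; simp [hs', Finset.mem_erase]; tauto
    have hcard' : s'.card = n - 2 := by
      rw [hs', Finset.card_erase_of_mem (Finset.mem_erase.mpr ⟨fun h => hva h.symm, has⟩),
        Finset.card_erase_of_mem hvs, hcard]
      omega
    have hrs' : r ∈ s' := (hmem' r).mpr ⟨hrs, fun h => hvr h.symm, fun h => har h.symm⟩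
    have hcl' : ∀ u ∈ s', u ≠ r → pt u ∈ s' := by
      intro u hus' hur
      have hus := hs'sub hus'
      refine (hmem' (pt u)).mpr ⟨hcl u hus hur, hnochild u hus hur, ?_⟩
      intro h
      exact ((hmem' u).mp hus').2.1 (honly u hus hur h)
    obtain ⟨P', hP'card, hP'mem, hP'dis⟩ := ih (n-2) (by omega) s' hcard' hrs' hcl'
    have hnewne : s(v, pt v) ≠ s(a, pt a) := by
      intro h
      exact hva (edge_inj' hpt hd0 v a hvr har h)
    refine ⟨insert (s(v, pt v), s(a, pt a)) P', ?_, ?_, ?_⟩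
    · have hnotin : (s(v, pt v), s(a, pt a)) ∉ P' := by
        intro hin
        obtain ⟨⟨u, hus', hur, hu⟩, _, _, _⟩ := hP'mem _ hin
        have := edge_inj' hpt hd0 u v hur hvr hu.symm
        exact ((hmem' u).mp hus').2.1 this
      rw [Finset.card_insert_of_notMem hnotin]
      omega
    · intro p hp
      rcases Finset.mem_insert.mp hp with rfl | hp'
      · refine ⟨⟨v, hvs, hvr, rfl⟩, ⟨a, has, har, rfl⟩, hnewne, ?_⟩
        exact ⟨a, Sym2.mem_mk_right _ _, Sym2.mem_mk_left _ _⟩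
      · obtain ⟨⟨u, hus, hur, hu⟩, ⟨w, hws, hwr, hw⟩, h3, h4⟩ := hP'mem p hp'
        exact ⟨⟨u, hs'sub hus, hur, hu⟩, ⟨w, hs'sub hws, hwr, hw⟩, h3, h4⟩
    · have key : ∀ q ∈ P', q.1 ≠ s(v, pt v) ∧ q.1 ≠ s(a, pt a) ∧
          q.2 ≠ s(v, pt v) ∧ q.2 ≠ s(a, pt a) := by
        intro q hq
        obtain ⟨⟨u, hus, hur, hu⟩, ⟨w, hws, hwr, hw⟩, _, _⟩ := hP'mem q hq
        have hu2 := (hmem' u).mp hus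
        have hw2 := (hmem' w).mp hws
        refine ⟨?_, ?_, ?_, ?_⟩ <;> intro h
        · exact hu2.2.1 (edge_inj' hpt hd0 u v hur hvr (hu ▸ h))
        · exact hu2.2.2 (edge_inj' hpt hd0 u a hur har (hu ▸ h))
        · exact hw2.2.1 (edge_inj' hpt hd0 w v hwr hvr (hw ▸ h))
        · exact hw2.2.2 (edge_inj' hpt hd0 w a hwr har (hw ▸ h))
      intro p hp q hq hpq
      rcases Finset.mem_insert.mp hp with rfl | hp' <;>
        rcases Finset.mem_insert.mp hq with rfl | hq'
      · exact absurd rfl hpq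
      · obtain ⟨k1, k2, k3, k4⟩ := key q hq'
        exact ⟨k1.symm, k3.symm, k2.symm, k4.symm⟩
      · obtain ⟨k1, k2, k3, k4⟩ := key p hp'
        exact ⟨k1, k2, k3, k4⟩
      · exact hP'dis p hp' q hq' hpq
end

section Main
open Finset
open scoped symmDiff

variable {V : Type*} [Fintype V] [DecidableEq V]

lemma even_card_symmDiff {α : Type*} [DecidableEq α] (A B : Finset α)
    (h : Odd A.card ↔ Odd B.card) : Even ((A ∆ B).card) := by
  have h1 : (A ∆ B) = (A \ B) ∪ (B \ A) := by
    ext x; simp [Finset.mem_symmDiff, Finset.mem_union, Finset.mem_sdiff]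
  have h2 : Disjoint (A \ B) (B \ A) := by
    rw [Finset.disjoint_left]
    intro a ha hb
    exact (Finset.mem_sdiff.mp hb).2 (Finset.mem_sdiff.mp ha).1
  have h3 := Finset.card_sdiff_add_card_inter A B
  have h4 := Finset.card_sdiff_add_card_inter B A
  rw [Finset.inter_comm B A] at h4
  rw [h1, Finset.card_union_of_disjoint h2]
  rw [Nat.odd_iff, Nat.odd_iff] at h
  have h5 : A.card % 2 = B.card % 2 := by omega
  rw [Nat.even_iff]
  omega

end Main

/-- A simple graph has the *double connectivity property* if any two distinct
edges sharing a common vertex lie together on a common cycle of length 3 or 4. -/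
def SimpleGraph.DoubleConnectivity {V : Type*} (G : SimpleGraph V) : Prop :=
  ∀ e₁ ∈ G.edgeSet, ∀ e₂ ∈ G.edgeSet, e₁ ≠ e₂ → (∃ v, v ∈ e₁ ∧ v ∈ e₂) →
    ∃ (u : V) (c : G.Walk u u), c.IsCycle ∧ (c.length = 3 ∨ c.length = 4) ∧
      e₁ ∈ c.edges ∧ e₂ ∈ c.edges

open Finset in
open scoped symmDiff in
theorem edge_bound_of_doubleConnectivity {V : Type*} [Fintype V] [DecidableEq V]
    (G : SimpleGraph V) [DecidableRel G.Adj]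
    (hconn : G.Connected) (hdc : G.DoubleConnectivity) :
    3 * ((Fintype.card V - 1) / 2) ≤ G.edgeFinset.card := by
  classical
  obtain ⟨r⟩ := hconn.nonempty
  -- parent function towards r
  have hex : ∀ v, v ≠ r → ∃ u, G.Adj v u ∧ G.dist r u + 1 = G.dist r v := by
    intro v hv
    have hreach : G.Reachable r v := hconn r v
    obtain ⟨w, hw⟩ := hreach.exists_walk_length_eq_dist
    obtain ⟨x, hadj, q, hq⟩ := SimpleGraph.Walk.exists_eq_cons_of_ne hv w.reverse
    have hlen : q.length + 1 = G.dist r v := by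
      have : w.reverse.length = w.length := SimpleGraph.Walk.length_reverse w
      rw [hq] at this
      simp only [SimpleGraph.Walk.length_cons] at this
      omega
    have h1 : G.dist r x ≤ q.length := by
      rw [SimpleGraph.dist_comm]
      exact SimpleGraph.dist_le q
    have h2 : G.dist r v ≤ G.dist r x + 1 := by
      refine le_trans (hconn.dist_triangle (v := x)) ?_
      have : G.dist x v ≤ 1 := by
        have := SimpleGraph.dist_le (SimpleGraph.Walk.cons hadj.symm SimpleGraph.Walk.nil)
        simpa using this
      omega
    exact ⟨x, hadj, by omega⟩
  set pt : V → V := fun v => if h : v = r then r else (hex v h).choose with hptdef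
  have hpt_adj : ∀ v, v ≠ r → G.Adj v (pt v) := by
    intro v hv
    simp only [hptdef, dif_neg hv]
    exact (hex v hv).choose_spec.1
  have hpt : ∀ v, v ≠ r → G.dist r (pt v) + 1 = G.dist r v := by
    intro v hv
    simp only [hptdef, dif_neg hv]
    exact (hex v hv).choose_spec.2
  have hd0 : ∀ v, G.dist r v = 0 ↔ v = r := by
    intro v
    rw [(hconn r v).dist_eq_zero_iff]
    exact eq_comm
  set depth : V → ℕ := fun v => G.dist r v with hdepdef
  -- the spanning tree edge set
  set T : Finset (Sym2 V) := (Finset.univ.erase r).image (fun v => s(v, pt v)) with hT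
  have hTrep : ∀ x ∈ T, ∃ v, v ≠ r ∧ x = s(v, pt v) := by
    intro x hx
    rw [hT] at hx
    obtain ⟨v, hv, rfl⟩ := Finset.mem_image.mp hx
    exact ⟨v, (Finset.mem_erase.mp hv).1, rfl⟩
  have hTmem : ∀ v, v ≠ r → s(v, pt v) ∈ T := by
    intro v hv
    rw [hT]
    exact Finset.mem_image.mpr ⟨v, Finset.mem_erase.mpr ⟨hv, Finset.mem_univ v⟩, rfl⟩
  have hTE : T ⊆ G.edgeFinset := by
    intro x hx
    obtain ⟨v, hv, rfl⟩ := hTrep x hx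
    rw [SimpleGraph.mem_edgeFinset, SimpleGraph.mem_edgeSet]
    exact hpt_adj v hv
  have hTcard : T.card = Fintype.card V - 1 := by
    rw [hT, Finset.card_image_of_injOn, Finset.card_erase_of_mem (Finset.mem_univ r),
      Finset.card_univ]
    intro u hu v hv h
    exact edge_inj' hpt hd0 u v (Finset.mem_erase.mp hu).1 (Finset.mem_erase.mp hv).1 h
  -- the pairing
  obtain ⟨P, hPcard, hPmem, hPdis⟩ := tree_pairing hpt hd0 (Fintype.card V) Finset.univ
    Finset.card_univ (Finset.mem_univ r) (fun v _ hv => Finset.mem_univ (pt v))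
  rw [Finset.card_univ] at hPcard
  -- choose a short cycle (as an edge Finset) for each pair
  have hQex : ∀ pq : Sym2 V × Sym2 V, ∃ C : Finset (Sym2 V), pq ∈ P →
      (∀ v, Even ((C.filter (fun e => v ∈ e)).card)) ∧ pq.1 ∈ C ∧ pq.2 ∈ C ∧
      C ⊆ G.edgeFinset ∧ C.card ≤ 4 := by
    intro pq
    by_cases hpq : pq ∈ P
    swap
    · exact ⟨∅, fun h => absurd h hpq⟩
    obtain ⟨⟨v, _, hvr, hv⟩, ⟨w, _, hwr, hw⟩, hne, hshare⟩ := hPmem pq hpq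
    have he1 : pq.1 ∈ G.edgeSet := by
      rw [hv, SimpleGraph.mem_edgeSet]; exact hpt_adj v hvr
    have he2 : pq.2 ∈ G.edgeSet := by
      rw [hw, SimpleGraph.mem_edgeSet]; exact hpt_adj w hwr
    obtain ⟨u, c, hcyc, hlen, hm1, hm2⟩ := hdc pq.1 he1 pq.2 he2 hne hshare
    refine ⟨c.edges.toFinset,
      fun _ => ⟨?_, List.mem_toFinset.mpr hm1, List.mem_toFinset.mpr hm2, ?_, ?_⟩⟩
    · exact fun v' => cycle_even_incidence c hcyc.edges_nodup v'
    · intro e he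
      rw [SimpleGraph.mem_edgeFinset]
      exact c.edges_subset_edgeSet (List.mem_toFinset.mp he)
    · rw [List.toFinset_card_of_nodup hcyc.edges_nodup, SimpleGraph.Walk.length_edges]
      omega
  obtain ⟨Cf, hCf⟩ := Classical.axiomOfChoice hQex
  -- main inequality : enough to find (n-1)/2 non-tree edges
  have hTsubcard : T.card ≤ G.edgeFinset.card := Finset.card_le_card hTE
  have hsdiff : (G.edgeFinset \ T).card = G.edgeFinset.card - T.card :=
    Finset.card_sdiff_of_subset hTE
  suffices hp : (Fintype.card V - 1) / 2 ≤ (G.edgeFinset \ T).card by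
    omega
  by_contra hlt
  push_neg at hlt
  -- pigeonhole : two distinct subsets of P with the same odd-pattern on non-tree edges
  have hcards : ((G.edgeFinset \ T).powerset).card < (P.powerset).card := by
    rw [Finset.card_powerset, Finset.card_powerset]
    exact Nat.pow_lt_pow_right one_lt_two (lt_of_lt_of_le hlt hPcard)
  obtain ⟨I, hI, J, hJ, hIJ, hFIJ⟩ := Finset.exists_ne_map_eq_of_card_lt_of_maps_to hcards
    (f := fun I => (G.edgeFinset \ T).filter
      (fun x => Odd ((I.filter (fun pq => x ∈ Cf pq)).card)))
    (fun I _ => Finset.mem_powerset.mpr (Finset.filter_subset _ _))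
  set K : Finset (Sym2 V × Sym2 V) := I ∆ J with hK
  have hKP : K ⊆ P := by
    intro pq hpq
    rcases Finset.mem_symmDiff.mp hpq with ⟨h1, _⟩ | ⟨h1, _⟩
    · exact Finset.mem_powerset.mp hI h1
    · exact Finset.mem_powerset.mp hJ h1
  have hKne : K.Nonempty := by
    rw [Finset.nonempty_iff_ne_empty, hK]
    intro h
    exact hIJ (Finset.symmDiff_eq_empty.mp h)
  set cnt : Sym2 V → ℕ := fun x => (K.filter (fun pq => x ∈ Cf pq)).card with hcnt
  -- parities on non-tree edges
  have heven1 : ∀ x ∈ G.edgeFinset \ T, Even (cnt x) := by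
    intro x hx
    have hx' := Finset.ext_iff.mp hFIJ x
    simp only [Finset.mem_filter, hx, true_and] at hx'
    have hKf : K.filter (fun pq => x ∈ Cf pq)
        = (I.filter (fun pq => x ∈ Cf pq)) ∆ (J.filter (fun pq => x ∈ Cf pq)) := by
      ext pq
      simp only [Finset.mem_filter, hK, Finset.mem_symmDiff]
      tauto
    show Even ((K.filter (fun pq => x ∈ Cf pq)).card)
    rw [hKf]
    exact even_card_symmDiff (I.filter (fun pq => x ∈ Cf pq))
      (J.filter (fun pq => x ∈ Cf pq)) hx'
  have heven2 : ∀ x, x ∉ T → Even (cnt x) := by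
    intro x hxT
    by_cases hxE : x ∈ G.edgeFinset
    · exact heven1 x (Finset.mem_sdiff.mpr ⟨hxE, hxT⟩)
    · have : K.filter (fun pq => x ∈ Cf pq) = ∅ := by
        rw [Finset.filter_eq_empty_iff]
        intro pq hpq hmem
        exact hxE ((hCf pq (hKP hpq)).2.2.2.1 hmem)
      show Even ((K.filter (fun pq => x ∈ Cf pq)).card)
      rw [this]; simp
  -- cnt as a sum of indicators
  have h1 : ∀ x, cnt x = ∑ pq ∈ K, (if x ∈ Cf pq then 1 else 0) := by
    intro x
    rw [Finset.sum_boole]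
    simp [hcnt]
  -- all edges are evenly covered
  have hTcover : ∀ x ∈ T, Even (cnt x) := by
    have hZ : T.filter (fun x => Odd (cnt x)) = ∅ := by
      apply forest_even_empty hpt hd0
      · intro x hx
        exact hTrep x (Finset.mem_filter.mp hx).1
      · intro v
        have hswap : (∑ x ∈ G.edgeFinset.filter (fun x => v ∈ x), cnt x)
            = ∑ pq ∈ K, ((Cf pq).filter (fun e => v ∈ e)).card := by
          rw [Finset.sum_congr rfl (fun x _ => h1 x), Finset.sum_comm]
          apply Finset.sum_congr rfl
          intro pq hpq
          rw [Finset.sum_boole]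
          have heq : (G.edgeFinset.filter (fun x => v ∈ x)).filter (fun x => x ∈ Cf pq)
              = (Cf pq).filter (fun e => v ∈ e) := by
            ext x
            simp only [Finset.mem_filter]
            constructor
            · rintro ⟨⟨_, hxv⟩, hxC⟩
              exact ⟨hxC, hxv⟩
            · rintro ⟨hxC, hxv⟩
              exact ⟨⟨(hCf pq (hKP hpq)).2.2.2.1 hxC, hxv⟩, hxC⟩
          rw [heq]
          simp
        have hsum : Even (∑ x ∈ G.edgeFinset.filter (fun x => v ∈ x), cnt x) := by
          rw [hswap]
          rw [even_sum_iff_even_card_odd]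
          have hfe : (K.filter (fun pq => Odd ((Cf pq).filter (fun e => v ∈ e)).card)) = ∅ := by
            rw [Finset.filter_eq_empty_iff]
            intro pq hpq
            rw [Nat.not_odd_iff_even]
            exact (hCf pq (hKP hpq)).1 v
          rw [hfe]
          simp
        rw [even_sum_iff_even_card_odd] at hsum
        have hident : (G.edgeFinset.filter (fun x => v ∈ x)).filter (fun x => Odd (cnt x))
            = (T.filter (fun x => Odd (cnt x))).filter (fun x => v ∈ x) := by
          ext x
          simp only [Finset.mem_filter]
          constructor
          · rintro ⟨⟨hxE, hxv⟩, hodd⟩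
            refine ⟨⟨?_, hodd⟩, hxv⟩
            by_contra hxT
            exact (Nat.not_even_iff_odd.mpr hodd) (heven2 x hxT)
          · rintro ⟨⟨hxT, hodd⟩, hxv⟩
            exact ⟨⟨hTE hxT, hxv⟩, hodd⟩
        rw [hident] at hsum
        exact hsum
    intro x hx
    by_contra hodd
    rw [Nat.not_even_iff_odd] at hodd
    have : x ∈ T.filter (fun x => Odd (cnt x)) := Finset.mem_filter.mpr ⟨hx, hodd⟩
    rw [hZ] at this
    simp at this
  have hevenAll : ∀ x, Even (cnt x) := by
    intro x
    by_cases hx : x ∈ T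
    · exact hTcover x hx
    · exact heven2 x hx
  -- the set of pair edges
  have hKdisj : ∀ pq ∈ K, ∀ qq ∈ K, pq ≠ qq →
      Disjoint ({pq.1, pq.2} : Finset (Sym2 V)) {qq.1, qq.2} := by
    intro pq hpq qq hqq hne
    obtain ⟨d1, d2, d3, d4⟩ := hPdis pq (hKP hpq) qq (hKP hqq) hne
    rw [Finset.disjoint_left]
    intro a ha hb
    simp only [Finset.mem_insert, Finset.mem_singleton] at ha hb
    rcases ha with rfl | rfl
    · rcases hb with h | h
      · exact d1 h
      · exact d2 h
    · rcases hb with h | h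
      · exact d3 h
      · exact d4 h
  set PK : Finset (Sym2 V) := K.biUnion (fun pq => {pq.1, pq.2}) with hPK
  have hPKT : PK ⊆ T := by
    intro x hx
    obtain ⟨pq, hpq, hmem⟩ := Finset.mem_biUnion.mp hx
    obtain ⟨⟨v1, _, hv1r, hv1⟩, ⟨v2, _, hv2r, hv2⟩, _, _⟩ := hPmem pq (hKP hpq)
    rcases Finset.mem_insert.mp hmem with rfl | h
    · rw [hv1]; exact hTmem v1 hv1r
    · rw [Finset.mem_singleton] at h
      subst h
      rw [hv2]; exact hTmem v2 hv2r
  -- upper bound: each cycle contains at most 3 pair edges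
  have hupper : ∀ pq ∈ K, ((Cf pq) ∩ PK).card ≤ 3 := by
    intro pq hpq
    obtain ⟨hc_even, hc1, hc2, hcE, hc4⟩ := hCf pq (hKP hpq)
    have hnotsub : ∃ x ∈ Cf pq, x ∉ T := by
      by_contra hsub
      push_neg at hsub
      have : Cf pq = ∅ := forest_even_empty hpt hd0 (Cf pq)
        (fun x hx => hTrep x (hsub x hx)) hc_even
      rw [this] at hc1
      simp at hc1
    obtain ⟨x, hxC, hxT⟩ := hnotsub
    have hsub2 : (Cf pq) ∩ PK ⊆ (Cf pq).erase x := by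
      intro y hy
      obtain ⟨hy1, hy2⟩ := Finset.mem_inter.mp hy
      refine Finset.mem_erase.mpr ⟨?_, hy1⟩
      rintro rfl
      exact hxT (hPKT hy2)
    calc ((Cf pq) ∩ PK).card ≤ ((Cf pq).erase x).card := Finset.card_le_card hsub2
    _ = (Cf pq).card - 1 := Finset.card_erase_of_mem hxC
    _ ≤ 3 := by omega
  -- each pair edge is covered at least twice
  have hcnt2 : ∀ pq ∈ K, 2 ≤ cnt pq.1 ∧ 2 ≤ cnt pq.2 := by
    intro pq hpq
    obtain ⟨_, hc1, hc2, _, _⟩ := hCf pq (hKP hpq)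
    constructor
    · have hpos : 0 < cnt pq.1 :=
        Finset.card_pos.mpr ⟨pq, Finset.mem_filter.mpr ⟨hpq, hc1⟩⟩
      obtain ⟨k, hk⟩ := hevenAll pq.1
      omega
    · have hpos : 0 < cnt pq.2 :=
        Finset.card_pos.mpr ⟨pq, Finset.mem_filter.mpr ⟨hpq, hc2⟩⟩
      obtain ⟨k, hk⟩ := hevenAll pq.2
      omega
  -- double counting
  have hdouble : ∑ pq ∈ K, ((Cf pq) ∩ PK).card = ∑ x ∈ PK, cnt x := by
    rw [Finset.sum_congr rfl (fun x _ => h1 x), Finset.sum_comm]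
    apply Finset.sum_congr rfl
    intro pq _
    rw [Finset.sum_boole]
    rw [Finset.inter_comm, ← Finset.filter_mem_eq_inter]
    simp
  have hlow : 4 * K.card ≤ ∑ x ∈ PK, cnt x := by
    rw [hPK, Finset.sum_biUnion]
    · calc 4 * K.card = ∑ _pq ∈ K, 4 := by rw [Finset.sum_const]; ring
      _ ≤ ∑ pq ∈ K, ∑ x ∈ ({pq.1, pq.2} : Finset (Sym2 V)), cnt x := by
        apply Finset.sum_le_sum
        intro pq hpq
        rw [Finset.sum_pair (hPmem pq (hKP hpq)).2.2.1]
        have := hcnt2 pq hpq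
        omega
    · intro pq hpq qq hqq hne
      exact hKdisj pq hpq qq hqq hne
  have hup : ∑ pq ∈ K, ((Cf pq) ∩ PK).card ≤ 3 * K.card := by
    calc ∑ pq ∈ K, ((Cf pq) ∩ PK).card ≤ ∑ _pq ∈ K, 3 := Finset.sum_le_sum hupper
    _ = 3 * K.card := by rw [Finset.sum_const]; ring
  have hK0 : K.card = 0 := by omega
  rw [Finset.card_eq_zero] at hK0
  rw [Finset.nonempty_iff_ne_empty] at hKne
  exact hKne hK0
end

section
/- Let G be a finite connected simple graph with at least 2 vertices such that any two distinct non-adjacent vertices of G have the same neighborhood. Then the vertex set of G can be partitioned into two disjoint nonempty sets K and L such that every vertex of K is adjacent in G to every vertex of L. -/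
namespace SimpleGraph

variable {V : Type*} {G : SimpleGraph V}

lemma adj_of_not_adj_of_adj
    (h : ∀ v w : V, v ≠ w → ¬ G.Adj v w → G.neighborSet v = G.neighborSet w)
    {a v w : V} (hav : ¬ G.Adj a v) (haw : G.Adj a w) : G.Adj v w := by
  obtain rfl | hva := eq_or_ne v a
  · exact haw
  · have hN : G.neighborSet v = G.neighborSet a := h v a hva fun hva' => hav hva'.symm
    exact (hN ▸ haw : w ∈ G.neighborSet v)

end SimpleGraph

/-- A finite connected simple graph with at least 2 vertices, in which any two distinct
non-adjacent vertices have the same neighborhood, admits a partition of its vertex set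
into two disjoint nonempty sets `K` and `L` such that every vertex of `K` is adjacent
to every vertex of `L`. -/
theorem exists_join_decomposition_of_nonadj_same_neighborhood {V : Type*} [Fintype V]
    (G : SimpleGraph V)
    (hcard : 2 ≤ Fintype.card V)
    (hconn : G.Connected)
    (h : ∀ v w : V, v ≠ w → ¬ G.Adj v w → G.neighborSet v = G.neighborSet w) :
    ∃ K L : Set V, K.Nonempty ∧ L.Nonempty ∧ Disjoint K L ∧ K ∪ L = Set.univ ∧
      ∀ v ∈ K, ∀ w ∈ L, G.Adj v w := by
  have : Nontrivial V := Fintype.one_lt_card_iff_nontrivial.mp hcard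
  obtain ⟨a⟩ := hconn.nonempty
  refine ⟨(G.neighborSet a)ᶜ, G.neighborSet a, ⟨a, G.irrefl⟩,
    hconn.preconnected.exists_adj_of_nontrivial a, disjoint_compl_left,
    Set.compl_union_self _, fun v hv w hw => SimpleGraph.adj_of_not_adj_of_adj h hv hw⟩
end

section
/- Let G be a finite connected simple graph with at least 2 vertices such that any two distinct non-adjacent vertices of G have the same neighborhood, such that every vertex of G has even degree, and such that G is not isomorphic to the complete graph on 3 vertices. Then the vertex set of G can be partitioned into two disjoint sets K and L, each containing at least 2 vertices, such that every vertex of K is adjacent in G to every vertex of L. -/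
lemma conn_deg_pos {V : Type*} [Fintype V] [DecidableEq V] (G : SimpleGraph V)
    [DecidableRel G.Adj] (hcard : 2 ≤ Fintype.card V) (hconn : G.Connected) (v : V) :
    0 < G.degree v := by
  rw [G.degree_pos_iff_exists_adj v]
  obtain ⟨u, hu⟩ := Fintype.exists_ne_of_one_lt_card (by omega) v
  obtain ⟨p⟩ := hconn.preconnected v u
  cases p with
  | nil => exact absurd rfl hu
  | cons hadj _ => exact ⟨_, hadj⟩

/-- A finite connected simple graph with at least 2 vertices, in which any two distinct
non-adjacent vertices have the same neighborhood, in which every vertex has even degree,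
and which is not isomorphic to the complete graph on 3 vertices, admits a partition of
its vertex set into two disjoint sets `K` and `L`, each of size at least 2, such that
every vertex of `K` is adjacent to every vertex of `L`. -/
theorem exists_big_join_decomposition_of_nonadj_same_neighborhood {V : Type*} [Fintype V]
    [DecidableEq V] (G : SimpleGraph V) [DecidableRel G.Adj]
    (hcard : 2 ≤ Fintype.card V)
    (hconn : G.Connected)
    (h : ∀ v w : V, v ≠ w → ¬ G.Adj v w → G.neighborSet v = G.neighborSet w)
    (heven : ∀ v : V, Even (G.degree v))
    (hK3 : ¬ Nonempty (G ≃g (⊤ : SimpleGraph (Fin 3)))) :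
    ∃ K L : Finset V, 2 ≤ K.card ∧ 2 ≤ L.card ∧ Disjoint K L ∧ K ∪ L = Finset.univ ∧
      ∀ v ∈ K, ∀ w ∈ L, G.Adj v w := by
  by_cases hcomp : ∀ v w : V, v ≠ w → G.Adj v w
  · -- complete graph case
    have hG : G = ⊤ := by
      ext v w
      simp only [SimpleGraph.top_adj]
      exact ⟨fun h' => h'.ne, fun h' => hcomp v w h'⟩
    obtain ⟨a, b, hab⟩ := Fintype.exists_pair_of_one_lt_card (α := V) (by omega)
    have hnb : G.neighborFinset a = Finset.univ.erase a := by
      ext x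
      simp only [SimpleGraph.mem_neighborFinset, Finset.mem_erase, Finset.mem_univ, and_true]
      exact ⟨fun h' => (G.ne_of_adj h').symm, fun h' => hcomp a x (Ne.symm h')⟩
    have hdeg := heven a
    rw [SimpleGraph.degree, hnb, Finset.card_erase_of_mem (Finset.mem_univ a),
      Finset.card_univ] at hdeg
    obtain ⟨k, hk⟩ := hdeg
    have hne3 : Fintype.card V ≠ 3 := by
      intro h3
      apply hK3
      rw [hG]
      exact ⟨SimpleGraph.Iso.completeGraph (Fintype.equivFinOfCardEq h3)⟩
    have hge5 : 5 ≤ Fintype.card V := by omega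
    refine ⟨{a, b}, {a, b}ᶜ, ?_, ?_, disjoint_compl_right, Finset.union_compl _, ?_⟩
    · rw [Finset.card_insert_of_notMem (by simpa using hab), Finset.card_singleton]
    · rw [Finset.card_compl, Finset.card_insert_of_notMem (by simpa using hab),
        Finset.card_singleton]
      omega
    · intro x hx y hy
      exact hcomp x y (by rintro rfl; exact (Finset.mem_compl.mp hy) hx)
  · push_neg at hcomp
    obtain ⟨v, w, hvw, hnadj⟩ := hcomp
    set K : Finset V := Finset.univ.filter (fun x => ¬ G.Adj v x) with hKdef
    have hvK : v ∈ K := by simp [hKdef, G.irrefl]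
    have hwK : w ∈ K := by simp [hKdef, hnadj]
    have key : ∀ x ∈ K, G.neighborSet x = G.neighborSet v := by
      intro x hx
      rcases eq_or_ne x v with rfl | hne
      · rfl
      · exact (h v x (Ne.symm hne) (by simpa [hKdef] using hx)).symm
    have hadjKL : ∀ x ∈ K, ∀ y ∈ Kᶜ, G.Adj x y := by
      intro x hx y hy
      have hAvy : G.Adj v y := by
        have := Finset.mem_compl.mp hy
        simpa [hKdef] using this
      have : y ∈ G.neighborSet x := by rw [key x hx]; exact hAvy
      exact this
    refine ⟨K, Kᶜ, ?_, ?_, disjoint_compl_right, Finset.union_compl _, hadjKL⟩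
    · exact Finset.one_lt_card.mpr ⟨v, hvK, w, hwK, hvw⟩
    · by_contra hlt
      push_neg at hlt
      have hsub : G.neighborFinset v ⊆ Kᶜ := by
        intro y hy
        rw [SimpleGraph.mem_neighborFinset] at hy
        exact Finset.mem_compl.mpr (by simp [hKdef, hy])
      have hdle : G.degree v ≤ 1 := le_trans (Finset.card_le_card hsub) (by omega)
      have hpos := conn_deg_pos G hcard hconn v
      obtain ⟨k, hk⟩ := heven v
      omega
end

section
/- Let T be a finite tree with m edges. Then there exist ⌊m/2⌋ pairwise disjoint unordered pairs of edges of T such that the two edges in each pair share a common vertex. Equivalently, one can choose 2·⌊m/2⌋ of the edges of T and partition them into ⌊m/2⌋ pairs of adjacent edges. -/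
/-!
Root the tree at `r` and identify each non-root vertex `v` with the edge from `v` to its parent
`p v`. Two such edges are adjacent when one vertex is the parent of the other, or when the two
vertices are siblings. A deepest vertex can be paired with a sibling or, if it has none, with
its parent, and what remains is again the set of non-root vertices of a rooted tree; so the
`m` non-root vertices split into `⌊m/2⌋` disjoint parent/child or sibling pairs.
-/

open Function

section PairEntries

variable {α ι : Type*}

/-- `Injective (pairEntries f)` says that every pair `f i` has distinct entries and that the
pairs are pairwise disjoint. -/
def pairEntries (f : ι → α × α) : ι ⊕ ι → α :=
  Sum.elim (Prod.fst ∘ f) (Prod.snd ∘ f)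

lemma pairEntries_map {β : Type*} (e : α → β) (f : ι → α × α) :
    pairEntries (fun i => Prod.map e e (f i)) = e ∘ pairEntries f := by
  ext (i | i) <;> rfl

lemma pairEntries_inter_eq_empty {f : ι → α × α} (hf : Injective (pairEntries f)) {i j : ι}
    (hij : i ≠ j) : ({(f i).1, (f i).2} : Set α) ∩ {(f j).1, (f j).2} = ∅ := by
  ext x
  simp only [Set.mem_inter_iff, Set.mem_insert_iff, Set.mem_singleton_iff,
    Set.mem_empty_iff_false, iff_false, not_and]
  rintro (rfl | rfl) (h | h)
  exacts [hij (Sum.inl_injective (hf (a₁ := .inl i) (a₂ := .inl j) h)),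
    Sum.inl_ne_inr (hf (a₁ := .inl i) (a₂ := .inr j) h),
    Sum.inr_ne_inl (hf (a₁ := .inr i) (a₂ := .inl j) h),
    hij (Sum.inr_injective (hf (a₁ := .inr i) (a₂ := .inr j) h))]

lemma injective_pairEntries_cons {k : ℕ} {q : α × α} {f : Fin k → α × α}
    (hf : Injective (pairEntries f)) (hq : q.1 ≠ q.2) (h₁ : q.1 ∉ Set.range (pairEntries f))
    (h₂ : q.2 ∉ Set.range (pairEntries f)) :
    Injective (pairEntries (Fin.cons q f : Fin (k + 1) → α × α)) := by
  rw [pairEntries, Fin.comp_cons, Fin.comp_cons]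
  refine Injective.sumElim (Fin.cons_injective_iff.2 ⟨?_, hf.comp Sum.inl_injective⟩)
    (Fin.cons_injective_iff.2 ⟨?_, hf.comp Sum.inr_injective⟩) fun i j => ?_
  · exact fun ⟨i, hi⟩ => h₁ ⟨.inl i, hi⟩
  · exact fun ⟨i, hi⟩ => h₂ ⟨.inr i, hi⟩
  cases i using Fin.cases <;> cases j using Fin.cases
  · exact hq
  · exact fun h => h₁ ⟨.inr _, h.symm⟩
  · exact fun h => h₂ ⟨.inl _, h⟩
  · exact hf.ne Sum.inl_ne_inr

end PairEntries

section ParentPairing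

variable {V : Type*} [DecidableEq V] {p : V → V} {d : V → ℕ} {r : V} {S : Finset V}

lemma exists_parent_or_sibling_pair (hd : ∀ x ∈ S, d x = d (p x) + 1) (hr : d r = 0)
    (hclosed : ∀ x ∈ S, p x ∈ S ∨ p x = r) (hS : 2 ≤ S.card) :
    ∃ a ∈ S, ∃ b ∈ S, a ≠ b ∧ (p a = b ∨ p a = p b) ∧
      ∀ x ∈ (S.erase a).erase b, p x ∈ (S.erase a).erase b ∨ p x = r := by
  obtain ⟨v, hv, hmax⟩ := S.exists_max_image d (Finset.card_pos.1 (by omega))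
  have childless : ∀ x ∈ S, ∀ y, d v ≤ d y → p x ≠ y := by
    rintro x hx y hy rfl
    have := hd x hx
    have := hmax x hx
    omega
  have erase_closed : ∀ a b, (∀ x ∈ (S.erase a).erase b, p x ≠ a ∧ p x ≠ b) →
      ∀ x ∈ (S.erase a).erase b, p x ∈ (S.erase a).erase b ∨ p x = r := by
    intro a b hab x hx
    have ⟨hxa, hxb⟩ := hab x hx
    simp only [Finset.mem_erase] at hx ⊢
    exact (hclosed x hx.2.2).imp_left fun h => ⟨hxb, hxa, h⟩
  by_cases hsib : ∃ w ∈ S, w ≠ v ∧ p w = p v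
  · obtain ⟨w, hw, hwv, hpw⟩ := hsib
    have hdw : d w = d v := by rw [hd w hw, hd v hv, hpw]
    refine ⟨v, hv, w, hw, hwv.symm, .inr hpw.symm, erase_closed v w fun x hx => ?_⟩
    have hxS := Finset.mem_of_mem_erase (Finset.mem_of_mem_erase hx)
    exact ⟨childless x hxS v le_rfl, childless x hxS w hdw.ge⟩
  push Not at hsib
  -- A deepest vertex hanging from the root has depth 1, so every vertex would be its sibling.
  have hpv : p v ∈ S := by
    refine (hclosed v hv).resolve_right fun hroot => ?_
    have hsingle : ∀ x ∈ S, x = v := by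
      intro x hx
      by_contra hxv
      refine hsib x hx hxv ((hclosed x hx).elim (fun hpx => ?_) (·.trans hroot.symm))
      have := hd x hx
      have := hd (p x) hpx
      have := hd v hv
      have := hmax x hx
      rw [hroot, hr] at *
      omega
    have := Finset.card_le_one.2 fun x hx y hy => (hsingle x hx).trans (hsingle y hy).symm
    omega
  have hvpv : v ≠ p v := fun h => by have := hd v hv; rw [← h] at this; omega
  refine ⟨v, hv, p v, hpv, hvpv, .inl rfl, erase_closed v (p v) fun x hx => ?_⟩
  have hxv := Finset.ne_of_mem_erase (Finset.mem_of_mem_erase hx)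
  have hxS := Finset.mem_of_mem_erase (Finset.mem_of_mem_erase hx)
  exact ⟨childless x hxS v le_rfl, hsib x hxS hxv⟩

theorem exists_parent_or_sibling_pairing (hd : ∀ x ∈ S, d x = d (p x) + 1) (hr : d r = 0)
    (hclosed : ∀ x ∈ S, p x ∈ S ∨ p x = r) :
    ∃ f : Fin (S.card / 2) → V × V,
      (∀ i, (f i).1 ∈ S ∧ (f i).2 ∈ S ∧
        (p (f i).1 = (f i).2 ∨ p (f i).1 = p (f i).2)) ∧
        Injective (pairEntries f) := by
  induction hn : S.card using Nat.strong_induction_on generalizing S with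
  | _ n ih =>
  rcases lt_or_ge n 2 with hsmall | hS
  · rw [show n / 2 = 0 by omega]
    exact ⟨Fin.elim0, fun i => i.elim0, injective_of_subsingleton _⟩
  obtain ⟨a, ha, b, hb, hab, hrel, hclosed'⟩ :=
    exists_parent_or_sibling_pair hd hr hclosed (hn ▸ hS)
  set S' := (S.erase a).erase b
  have hS'S : S' ⊆ S := (Finset.erase_subset _ _).trans (Finset.erase_subset _ _)
  have hcard : S'.card = n - 2 := by
    rw [Finset.card_erase_of_mem (Finset.mem_erase.2 ⟨hab.symm, hb⟩),
      Finset.card_erase_of_mem ha, hn]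
    omega
  obtain ⟨f, hfS, hf⟩ := ih (n - 2) (by omega) (fun x hx => hd x (hS'S hx)) hclosed' hcard
  have hrange : Set.range (pairEntries f) ⊆ S' := by
    rintro _ ⟨i | i, rfl⟩
    exacts [(hfS i).1, (hfS i).2.1]
  rw [show n / 2 = (n - 2) / 2 + 1 by omega]
  refine ⟨Fin.cons (a, b) f, Fin.cases ⟨ha, hb, hrel⟩ fun i => ?_,
    injective_pairEntries_cons hf hab (fun h => by simpa [S'] using hrange h)
      (fun h => by simpa [S'] using hrange h)⟩
  obtain ⟨h₁, h₂, hi⟩ := hfS i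
  exact ⟨hS'S h₁, hS'S h₂, hi⟩

end ParentPairing

lemma SimpleGraph.Connected.exists_parent {V : Type*} {G : SimpleGraph V} (hG : G.Connected)
    (r : V) :
    ∃ p : V → V, ∀ v, v ≠ r → G.Adj v (p v) ∧ G.dist v r = G.dist (p v) r + 1 := by
  suffices ∀ v, ∃ u, v ≠ r → G.Adj v u ∧ G.dist v r = G.dist u r + 1 by
    choose p hp using this
    exact ⟨p, hp⟩
  intro v
  by_cases hv : v = r
  · exact ⟨v, fun h => absurd hv h⟩
  obtain ⟨q, hq⟩ := (hG v r).exists_walk_length_eq_dist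
  have hpos : 0 < G.dist v r := hG.pos_dist_of_ne hv
  cases q with
  | nil => simp at hpos
  | @cons _ u _ hvu q =>
    refine ⟨u, fun _ => ⟨hvu, ?_⟩⟩
    have h₁ : G.dist u r ≤ q.length := SimpleGraph.dist_le q
    have h₂ : G.dist v r ≤ G.dist v u + G.dist u r := hG.dist_triangle
    have h₃ : G.dist v u = 1 := SimpleGraph.dist_eq_one_iff_adj.2 hvu
    rw [SimpleGraph.Walk.length_cons] at hq
    omega

lemma injOn_parent_edge {V : Type*} {p : V → V} {d : V → ℕ} {s : Set V}
    (hd : ∀ x ∈ s, d x = d (p x) + 1) : Set.InjOn (fun v => s(v, p v)) s := by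
  intro x hx y hy hxy
  rcases Sym2.eq_iff.1 hxy with ⟨h, -⟩ | ⟨h₁, h₂⟩
  · exact h
  · have := hd x hx
    have := hd y hy
    rw [← h₁, h₂] at *
    omega

/-- In any finite tree with `m` edges one can choose `⌊m/2⌋` pairwise disjoint
unordered pairs of edges such that the two edges in each pair share a common vertex. -/
theorem tree_exists_disjoint_adjacent_edge_pairs {V : Type*} [Fintype V] [DecidableEq V]
    (T : SimpleGraph V) [DecidableRel T.Adj] (htree : T.IsTree)
    (m : ℕ) (hm : m = T.edgeFinset.card) :
    ∃ f : Fin (m / 2) → Sym2 V × Sym2 V,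
      (∀ i, (f i).1 ∈ T.edgeSet ∧ (f i).2 ∈ T.edgeSet ∧ (f i).1 ≠ (f i).2 ∧
        ∃ v : V, v ∈ (f i).1 ∧ v ∈ (f i).2) ∧
      (∀ i j, i ≠ j →
        ({(f i).1, (f i).2} : Set (Sym2 V)) ∩ {(f j).1, (f j).2} = ∅) := by
  obtain ⟨r⟩ := htree.connected.nonempty
  obtain ⟨p, hp⟩ := htree.connected.exists_parent r
  have hcard : (Finset.univ.erase r).card = m := by
    have := htree.card_edgeFinset
    rw [Finset.card_erase_of_mem (Finset.mem_univ r), Finset.card_univ]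
    omega
  obtain ⟨g, hg, hg_inj⟩ := exists_parent_or_sibling_pairing (S := Finset.univ.erase r) (r := r)
    (fun x hx => (hp x (Finset.ne_of_mem_erase hx)).2) T.dist_self
    (fun x _ => or_iff_not_imp_right.2 fun h => Finset.mem_erase.2 ⟨h, Finset.mem_univ _⟩)
  set e : V → Sym2 V := fun v => s(v, p v)
  have hf_inj : Injective (pairEntries fun i => Prod.map e e (g i)) := by
    rw [pairEntries_map, (injOn_parent_edge fun x hx => (hp x hx).2).injective_iff]
    · exact hg_inj
    rintro _ ⟨i | i, rfl⟩
    exacts [Finset.ne_of_mem_erase (hg i).1, Finset.ne_of_mem_erase (hg i).2.1]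
  rw [← hcard]
  refine ⟨fun i => Prod.map e e (g i), fun i => ?_,
    fun i j => pairEntries_inter_eq_empty hf_inj⟩
  obtain ⟨h₁, h₂, hrel⟩ := hg i
  refine ⟨(hp _ (Finset.ne_of_mem_erase h₁)).1, (hp _ (Finset.ne_of_mem_erase h₂)).1,
    hf_inj.ne Sum.inl_ne_inr, ?_⟩
  rcases hrel with h | h
  · exact ⟨(g i).2, by simp [e, ← h], by simp [e]⟩
  · exact ⟨p (g i).1, by simp [e], by simp [e, h]⟩
end

section
/- Let n ≥ 2, let N = n(n−1)/2, and let l : Fin N → ℕ be such that at least n − 1 of the values l(i) are odd. Set S = Σ_i l(i), and for a natural number m define c(m) = (m² − 1)/8 if m is odd and c(m) = (m² − 4)/8 if m is even (as rational numbers). Then Σ_i c(l(i)) ≥ S²/(4n(n−1)) − (2n−3)(n−1)/8. -/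
/-- The arithmetic core of the lower bound for the Casson invariant of closed
positive braids: if `N = n(n-1)/2`, `l : Fin N → ℕ` has at least `n - 1` odd
values, `S = Σ l i`, and `c m = (m² - 1)/8` for odd `m`, `c m = (m² - 4)/8` for
even `m`, then `Σ c (l i) ≥ S²/(4n(n-1)) - (2n-3)(n-1)/8`. -/
theorem casson_braid_arith_bound (n : ℕ) (hn : 2 ≤ n) (N : ℕ) (hN : N = n * (n - 1) / 2)
    (l : Fin N → ℕ)
    (hodd : n - 1 ≤ (Finset.univ.filter fun i => Odd (l i)).card)
    (c : ℕ → ℚ)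
    (hc : ∀ m : ℕ, c m = if Odd m then ((m : ℚ) ^ 2 - 1) / 8 else ((m : ℚ) ^ 2 - 4) / 8)
    (S : ℚ) (hS : S = ∑ i : Fin N, (l i : ℚ)) :
    ∑ i : Fin N, c (l i) ≥
      S ^ 2 / (4 * (n : ℚ) * ((n : ℚ) - 1)) - (2 * (n : ℚ) - 3) * ((n : ℚ) - 1) / 8 := by
  have hn1 : (1:ℕ) ≤ n := le_trans one_le_two hn
  have heven : Even (n * (n - 1)) := by
    rcases Nat.even_or_odd n with h | h
    · exact h.mul_right _
    · exact (Nat.Odd.sub_odd h odd_one).mul_left _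
  have hN2 : 2 * N = n * (n - 1) := by
    rw [hN, Nat.two_mul_div_two_of_even heven]
  have hNQ : (N : ℚ) * 2 = (n : ℚ) * ((n : ℚ) - 1) := by
    have := congrArg (Nat.cast : ℕ → ℚ) hN2
    push_cast [Nat.cast_sub hn1] at this
    linarith
  have hNpos : 0 < N := by
    rcases Nat.eq_zero_or_pos N with h | h
    · exfalso
      have : n * (n - 1) = 0 := by omega
      have h1 : 0 < n * (n - 1) := Nat.mul_pos (by omega) (by omega)
      omega
    · exact h
  -- penalties
  set O := (Finset.univ.filter fun i => Odd (l i)).card with hO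
  have hOle : O ≤ N := by
    simpa using Finset.card_filter_le Finset.univ fun i => Odd (l i)
  -- split the sum
  have hsum : ∑ i : Fin N, c (l i)
      = (∑ i : Fin N, (l i : ℚ) ^ 2) / 8
        - ∑ i : Fin N, (if Odd (l i) then (1:ℚ)/8 else 1/2) := by
    rw [Finset.sum_div, ← Finset.sum_sub_distrib]
    refine Finset.sum_congr rfl fun i _ => ?_
    rw [hc]
    split_ifs <;> ring
  have hpen : ∑ i : Fin N, (if Odd (l i) then (1:ℚ)/8 else 1/2)
      = (O : ℚ) / 8 + ((N : ℚ) - O) / 2 := by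
    rw [Finset.sum_ite, Finset.sum_const, Finset.sum_const]
    have hcard : ((Finset.univ.filter fun i => ¬ Odd (l i)).card : ℚ)
        = (N : ℚ) - (O : ℚ) := by
      have := Finset.card_filter_add_card_filter_not
        (s := (Finset.univ : Finset (Fin N))) (p := fun i => Odd (l i))
      simp only [Finset.card_univ, Fintype.card_fin] at this
      have h2 : (Finset.univ.filter fun i => ¬ Odd (l i)).card = N - O := by omega
      rw [h2, Nat.cast_sub hOle]
    rw [nsmul_eq_mul, nsmul_eq_mul, hcard]
    ring
  -- Cauchy-Schwarz
  have hCS : S ^ 2 ≤ (N : ℚ) * ∑ i : Fin N, (l i : ℚ) ^ 2 := by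
    rw [hS]
    have := sq_sum_le_card_mul_sum_sq (s := (Finset.univ : Finset (Fin N)))
      (f := fun i => (l i : ℚ))
    simpa using this
  set T := ∑ i : Fin N, (l i : ℚ) ^ 2 with hT
  have hD : 4 * (n : ℚ) * ((n : ℚ) - 1) = 8 * (N : ℚ) := by linarith
  have hDpos : (0:ℚ) < 8 * (N : ℚ) := by positivity
  have hfrac : S ^ 2 / (4 * (n : ℚ) * ((n : ℚ) - 1)) ≤ T / 8 := by
    rw [hD, div_le_div_iff₀ hDpos (by norm_num)]
    nlinarith [hCS]
  have hOge : ((n:ℚ) - 1) ≤ (O : ℚ) := by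
    have := (Nat.cast_le (α := ℚ)).2 hodd
    push_cast [Nat.cast_sub hn1] at this
    linarith
  rw [hsum, hpen]
  have hpenle : (O : ℚ) / 8 + ((N : ℚ) - O) / 2
      ≤ (2 * (n : ℚ) - 3) * ((n : ℚ) - 1) / 8 := by
    nlinarith [hNQ, hOge]
  linarith
end
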